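/- arXiv:2303.12999 — 2 statements merged into one kernel-verified Lean document; each statement's English description precedes it below -/
import Mathlib

section
/- If f : ℝᵐ → ℝ is twice continuously differentiable, ∇f is L-Lipschitz, ∇²f is ρ-Lipschitz, and ‖∇f(w)‖ ≤ B for all w, then for 0 < α ≤ 1/L the function F(w) = f(w − α∇f(w)) has Lipschitz gradient with constant L_F = 4L + αρB; i.e., ‖∇F(w) − ∇F(u)‖ ≤ (4L + αρB)‖w − u‖ for all w, u. -/
/-!
By the chain rule, `∇F(w) = J(w)† ∇f(g w)` with `g w = w - α ∇f w` and `J(w) = I - α ∇²f(w)`.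
Since `αL ≤ 1`, both `J` and `g` are bounded by `2` (in norm, resp. Lipschitz constant), and
`J` is `αρ`-Lipschitz. Splitting
`J(w)† ∇f(g w) - J(u)† ∇f(g u) = J(w)† (∇f(g w) - ∇f(g u)) + (J(w) - J(u))† ∇f(g u)`
bounds the first term by `2 · L · 2‖w - u‖` and the second by `αρ‖w - u‖ · B`.
-/

open ContinuousLinearMap InnerProductSpace

section

variable {E F : Type*} [NormedAddCommGroup E] [InnerProductSpace ℝ E] [CompleteSpace E]
  [NormedAddCommGroup F] [InnerProductSpace ℝ F] [CompleteSpace F]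

theorem HasGradientAt.comp_hasFDerivAt {f : F → ℝ} {g : E → F} {p : F} {g' : E →L[ℝ] F} {x : E}
    (hf : HasGradientAt f p (g x)) (hg : HasFDerivAt g g' x) :
    HasGradientAt (f ∘ g) (adjoint g' p) x := by
  rw [hasGradientAt_iff_hasFDerivAt]
  refine (hf.hasFDerivAt.comp x hg).congr_fderiv ?_
  ext v
  simp [adjoint_inner_left]

theorem contDiff_gradient {f : E → ℝ} {n : WithTop ℕ∞} (hf : ContDiff ℝ (n + 1) f) :
    ContDiff ℝ n (gradient f) :=
  (toDual ℝ E).symm.contDiff.comp (hf.fderiv_right le_rfl)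

theorem gradient_comp_sub_smul_gradient {f : E → ℝ} {α : ℝ} {x : E}
    (hf : DifferentiableAt ℝ f (x - α • gradient f x))
    (hgf : DifferentiableAt ℝ (gradient f) x) :
    gradient (fun y => f (y - α • gradient f y)) x =
      adjoint (ContinuousLinearMap.id ℝ E - α • fderiv ℝ (gradient f) x)
        (gradient f (x - α • gradient f x)) :=
  (hf.hasGradientAt.comp_hasFDerivAt (g := fun y => y - α • gradient f y)
    ((hasFDerivAt_id x).sub (hgf.hasFDerivAt.const_smul α))).gradient

end

section

variable {𝕜 E F : Type*} [NontriviallyNormedField 𝕜] [SeminormedAddCommGroup E] [NormedSpace 𝕜 E]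
  [SeminormedAddCommGroup F] [NormedSpace 𝕜 F]

theorem ContinuousLinearMap.norm_apply_sub_apply_le (A B : E →L[𝕜] F) (p q : E) :
    ‖A p - B q‖ ≤ ‖A‖ * ‖p - q‖ + ‖A - B‖ * ‖q‖ :=
  calc ‖A p - B q‖ = ‖A (p - q) + (A - B) q‖ := by simp
    _ ≤ ‖A‖ * ‖p - q‖ + ‖A - B‖ * ‖q‖ := norm_add_le_of_le (A.le_opNorm _) ((A - B).le_opNorm _)

theorem norm_id_sub_smul_le (α : 𝕜) (T : E →L[𝕜] E) :
    ‖ContinuousLinearMap.id 𝕜 E - α • T‖ ≤ 1 + ‖α‖ * ‖T‖ :=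
  (norm_sub_le _ _).trans (add_le_add norm_id_le (opNorm_smul_le _ _))

end

theorem norm_sub_smul_sub_sub_smul_le {E : Type*} [SeminormedAddCommGroup E] [NormedSpace ℝ E]
    {G : E → E} {L α : ℝ} (hG : ∀ w u, ‖G w - G u‖ ≤ L * ‖w - u‖) (hα : 0 ≤ α) (w u : E) :
    ‖(w - α • G w) - (u - α • G u)‖ ≤ (1 + α * L) * ‖w - u‖ :=
  calc ‖(w - α • G w) - (u - α • G u)‖ = ‖(w - u) - α • (G w - G u)‖ := by
        rw [smul_sub]; abel_nf
    _ ≤ ‖w - u‖ + α * (L * ‖w - u‖) := by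
        refine (norm_sub_le _ _).trans (add_le_add_right ?_ _)
        rw [norm_smul, Real.norm_of_nonneg hα]
        exact mul_le_mul_of_nonneg_left (hG w u) hα
    _ = (1 + α * L) * ‖w - u‖ := by ring

theorem stmt_16 {m : ℕ} (f : EuclideanSpace ℝ (Fin m) → ℝ) (L ρ B α : ℝ)
    (hf : ContDiff ℝ 2 f)
    (hL : ∀ w u, ‖gradient f w - gradient f u‖ ≤ L * ‖w - u‖)
    (hρ : ∀ w u, ‖fderiv ℝ (gradient f) w - fderiv ℝ (gradient f) u‖ ≤ ρ * ‖w - u‖)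
    (hB : ∀ w, ‖gradient f w‖ ≤ B)
    (hα : 0 < α) (hαL : α ≤ 1 / L) :
    ∀ w u, ‖gradient (fun x => f (x - α • gradient f x)) w -
              gradient (fun x => f (x - α • gradient f x)) u‖
      ≤ (4 * L + α * ρ * B) * ‖w - u‖ := by
  intro w u
  have hL0 : 0 < L := by
    by_contra! h
    linarith [one_div_nonpos.mpr h]
  have hαL1 : α * L ≤ 1 := (le_div_iff₀ hL0).mp (by simpa using hαL)
  have hfd : Differentiable ℝ f := hf.differentiable (by norm_num)
  have hgd : Differentiable ℝ (gradient f) :=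
    (contDiff_gradient (n := 1) hf).differentiable one_ne_zero
  have hJac : ‖ContinuousLinearMap.id ℝ _ - α • fderiv ℝ (gradient f) w‖ ≤ 2 := by
    refine (norm_id_sub_smul_le _ _).trans ?_
    rw [Real.norm_of_nonneg hα.le]
    nlinarith [norm_fderiv_le_of_lip' ℝ hL0.le (Filter.Eventually.of_forall fun y => hL y w)]
  have hstep : ‖(w - α • gradient f w) - (u - α • gradient f u)‖ ≤ 2 * ‖w - u‖ :=
    (norm_sub_smul_sub_sub_smul_le hL hα.le w u).trans (by gcongr; linarith)
  rw [gradient_comp_sub_smul_gradient (hfd _) (hgd w),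
    gradient_comp_sub_smul_gradient (hfd _) (hgd u)]
  refine (norm_apply_sub_apply_le _ _ _ _).trans ?_
  -- the adjoint is an isometry, and the two Jacobians differ by `α • (∇²f u - ∇²f w)`
  rw [← map_sub, LinearIsometryEquiv.norm_map, LinearIsometryEquiv.norm_map,
    sub_sub_sub_cancel_left, ← smul_sub, norm_smul, Real.norm_of_nonneg hα.le]
  calc _ ≤ 2 * (L * (2 * ‖w - u‖)) + α * (ρ * ‖w - u‖) * B := by
        gcongr
        · exact (hL _ _).trans (mul_le_mul_of_nonneg_left hstep hL0.le)
        · exact mul_nonneg hα.le ((norm_nonneg _).trans (hρ w u))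
        · simpa only [norm_sub_rev u w] using hρ u w
        · exact hB _
    _ = (4 * L + α * ρ * B) * ‖w - u‖ := by ring
end

section
/- Suppose each of n differentiable functions fᵢ : ℝᵐ → ℝ satisfies (1/n)∑ᵢ‖∇fᵢ(w) − ∇f(w)‖² ≤ γ_G² and (1/n)∑ᵢ‖∇²fᵢ(w) − ∇²f(w)‖² ≤ γ_H² where f = (1/n)∑ᵢ fᵢ, gradients are bounded by B and ∇fᵢ are L-Lipschitz. Then for Fᵢ(w) = fᵢ(w − α∇fᵢ(w)) with 0 < α ≤ 1/L and F = (1/n)∑ᵢFᵢ: (1/n)∑ᵢ‖∇Fᵢ(w) − ∇F(w)‖² ≤ 3B²α²γ_H² + 192γ_G² for all w. -/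
/-!
Write `Aᵢ = I - α ∇²fᵢ(w)` and `uᵢ = ∇fᵢ(w - α ∇fᵢ(w))`; the chain rule gives `∇Fᵢ(w) = Aᵢ* uᵢ`.
Comparing every `uᵢ` with the single vector `v = ∇f(p)`, `p = w - α ∇f(w)`, splits
`∇Fᵢ(w) - ∇F(w)` into `(Aᵢ - Ā)* v`, of norm at most `α B ‖∇²fᵢ(w) - ∇²f(w)‖`, and the centred
average of the `Aⱼ* (uⱼ - v)`. Since `‖Aⱼ‖ ≤ 1 + αL ≤ 2` and, by the Lipschitz bound,
`‖uⱼ - v‖ ≤ ‖∇fⱼ(w) - ∇f(w)‖ + ‖∇fⱼ(p) - ∇f(p)‖`, squaring with `(a + b + c)² ≤ 3(a² + b² + c²)`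
and Jensen's inequality bounds the mean square deviation by `3 α² B² γ_H² + 96 γ_G²`.
-/

open InnerProductSpace Finset

section Gradient

variable {E : Type*} [NormedAddCommGroup E] [InnerProductSpace ℝ E] [CompleteSpace E]

lemma ContDiff.differentiable_gradient {g : E → ℝ} (hg : ContDiff ℝ 2 g) :
    Differentiable ℝ (gradient g) :=
  (toDual ℝ E).symm.toContinuousLinearEquiv.differentiable.comp
    ((hg.fderiv_right (by norm_num)).differentiable one_ne_zero)

lemma gradient_const_mul_sum {ι : Type*} [Fintype ι] {h : ι → E → ℝ} {x : E} (c : ℝ)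
    (hh : ∀ j, DifferentiableAt ℝ (h j) x) :
    gradient (fun y => c * ∑ j, h j y) x = c • ∑ j, gradient (h j) x := by
  have : HasFDerivAt (fun y => c * ∑ j, h j y) (c • ∑ j, fderiv ℝ (h j) x) x :=
    (HasFDerivAt.fun_sum fun j _ => (hh j).hasFDerivAt).const_mul c
  rw [this.hasGradientAt.gradient, map_smulₛₗ, map_sum]
  simp [gradient]

lemma norm_fderiv_gradient_le_of_lipschitz {g : E → ℝ} {L : ℝ} (hL0 : 0 ≤ L)
    (hL : ∀ x y, ‖gradient g x - gradient g y‖ ≤ L * ‖x - y‖) (x : E) :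
    ‖fderiv ℝ (gradient g) x‖ ≤ L :=
  norm_fderiv_le_of_lip' ℝ hL0 (Filter.Eventually.of_forall fun y => hL y x)

lemma hasGradientAt_comp_sub_smul_gradient {g : E → ℝ} (hg : ContDiff ℝ 2 g) (α : ℝ) (w : E) :
    HasGradientAt (fun x => g (x - α • gradient g x))
      ((ContinuousLinearMap.id ℝ E - α • fderiv ℝ (gradient g) w).adjoint
        (gradient g (w - α • gradient g w))) w := by
  have hstep : HasFDerivAt (fun x => x - α • gradient g x)
      (ContinuousLinearMap.id ℝ E - α • fderiv ℝ (gradient g) w) w :=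
    (hasFDerivAt_id w).sub ((hg.differentiable_gradient w).hasFDerivAt.const_smul α)
  convert (((hg.differentiable (by norm_num) _).hasFDerivAt).comp w hstep).hasGradientAt using 1
  · rfl
  refine (toDual ℝ E).injective (ContinuousLinearMap.ext fun y => ?_)
  simp [ContinuousLinearMap.adjoint_inner_left]

lemma norm_adjoint_id_sub_smul_le {T : E →L[ℝ] E} {α L : ℝ} (hα : 0 ≤ α) (hT : ‖T‖ ≤ L) :
    ‖(ContinuousLinearMap.id ℝ E - α • T).adjoint‖ ≤ 1 + α * L := by
  rw [LinearIsometryEquiv.norm_map]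
  calc _ ≤ ‖ContinuousLinearMap.id ℝ E‖ + ‖α • T‖ := norm_sub_le _ _
    _ ≤ 1 + α * L := by
      rw [norm_smul, Real.norm_of_nonneg hα]
      gcongr
      exact ContinuousLinearMap.norm_id_le

lemma norm_gradient_sub_smul_sub_le {g : E → ℝ} {L α : ℝ}
    (hL : ∀ x y, ‖gradient g x - gradient g y‖ ≤ L * ‖x - y‖) (hα : 0 ≤ α) (hαL : α * L ≤ 1)
    (w a : E) :
    ‖gradient g (w - α • gradient g w) - gradient g (w - α • a)‖ ≤ ‖gradient g w - a‖ :=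
  calc _ ≤ L * ‖(w - α • gradient g w) - (w - α • a)‖ := hL _ _
    _ = α * L * ‖gradient g w - a‖ := by
      rw [sub_sub_sub_cancel_left, ← smul_sub, norm_smul, Real.norm_of_nonneg hα, norm_sub_rev]
      ring
    _ ≤ _ := mul_le_of_le_one_left (norm_nonneg _) hαL

end Gradient

section Mean

variable {ι : Type*} [Fintype ι]

lemma norm_apply_sub_mean_apply_le {E F : Type*} [NormedAddCommGroup E] [NormedSpace ℝ E]
    [NormedAddCommGroup F] [NormedSpace ℝ F] (M : ι → E →L[ℝ] F) (u : ι → E) (v : E) (i : ι) :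
    ‖M i (u i) - (1 / Fintype.card ι : ℝ) • ∑ j, M j (u j)‖ ≤
      ‖M i - (1 / Fintype.card ι : ℝ) • ∑ j, M j‖ * ‖v‖ + ‖M i‖ * ‖u i - v‖ +
        (1 / Fintype.card ι : ℝ) * ∑ j, ‖M j‖ * ‖u j - v‖ := by
  set c : ℝ := 1 / Fintype.card ι
  have hc : 0 ≤ c := by positivity
  have hsplit : M i (u i) - c • ∑ j, M j (u j) =
      (M i - c • ∑ j, M j) v + (M i (u i - v) - c • ∑ j, M j (u j - v)) := by
    simp only [map_sub, sub_apply, smul_apply, _root_.sum_apply, sum_sub_distrib,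
      smul_sub]
    abel
  have hmean : ‖c • ∑ j, M j (u j - v)‖ ≤ c * ∑ j, ‖M j‖ * ‖u j - v‖ := by
    rw [norm_smul, Real.norm_of_nonneg hc]
    gcongr
    exact (norm_sum_le _ _).trans (sum_le_sum fun j _ => (M j).le_opNorm _)
  rw [hsplit]
  calc _ ≤ ‖(M i - c • ∑ j, M j) v‖ + (‖M i (u i - v)‖ + ‖c • ∑ j, M j (u j - v)‖) :=
        (norm_add_le _ _).trans (add_le_add_right (norm_sub_le _ _) _)
    _ ≤ _ := by
      rw [← add_assoc]
      gcongr <;> exact ContinuousLinearMap.le_opNorm _ _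

lemma sub_mean_const_sub_smul {V : Type*} [AddCommGroup V] [Module ℝ V] (a : V) (α : ℝ)
    (x : ι → V) (i : ι) :
    (a - α • x i) - (1 / Fintype.card ι : ℝ) • ∑ j, (a - α • x j) =
      α • ((1 / Fintype.card ι : ℝ) • ∑ j, x j - x i) := by
  have : Nonempty ι := ⟨i⟩
  have : (Fintype.card ι : ℝ) ≠ 0 := Nat.cast_ne_zero.mpr Fintype.card_ne_zero
  rw [sum_sub_distrib, sum_const, card_univ, ← smul_sum, ← Nat.cast_smul_eq_nsmul ℝ]
  match_scalars <;> field_simp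
  exact sub_self 1

lemma norm_mean_le {V : Type*} [SeminormedAddCommGroup V] [NormedSpace ℝ V] {x : ι → V} {B : ℝ}
    (hB : ∀ j, ‖x j‖ ≤ B) (i : ι) : ‖(1 / Fintype.card ι : ℝ) • ∑ j, x j‖ ≤ B := by
  have : Nonempty ι := ⟨i⟩
  rw [norm_smul, Real.norm_of_nonneg (by positivity)]
  calc (1 / Fintype.card ι : ℝ) * ‖∑ j, x j‖ ≤ (1 / Fintype.card ι : ℝ) * ∑ _j : ι, B := by
        gcongr
        exact (norm_sum_le _ _).trans (sum_le_sum fun j _ => hB j)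
    _ = B := by simp [Fintype.card_ne_zero]

lemma sq_mean_le_mean_sq (x : ι → ℝ) :
    ((1 / Fintype.card ι : ℝ) * ∑ i, x i) ^ 2 ≤ (1 / Fintype.card ι : ℝ) * ∑ i, x i ^ 2 := by
  simpa only [one_div_mul_eq_div, card_univ] using
    sum_div_card_sq_le_sum_sq_div_card (s := univ) (f := x)

lemma mean_sq_add_le (x y : ι → ℝ) :
    (1 / Fintype.card ι : ℝ) * ∑ i, (x i + y i) ^ 2 ≤
      2 * ((1 / Fintype.card ι : ℝ) * ∑ i, x i ^ 2) +
        2 * ((1 / Fintype.card ι : ℝ) * ∑ i, y i ^ 2) := by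
  calc _ ≤ (1 / Fintype.card ι : ℝ) * ∑ i, (2 * x i ^ 2 + 2 * y i ^ 2) := by
        gcongr with i
        nlinarith [sq_nonneg (x i - y i)]
    _ = _ := by rw [sum_add_distrib, ← mul_sum, ← mul_sum]; ring

lemma mean_sq_le_of_le_add_add_mean (x a b : ι → ℝ) (k : ℝ) (hx : ∀ i, 0 ≤ x i)
    (h : ∀ i, x i ≤ k * a i + 2 * b i + 2 * ((1 / Fintype.card ι : ℝ) * ∑ j, b j)) :
    (1 / Fintype.card ι : ℝ) * ∑ i, x i ^ 2 ≤
      3 * k ^ 2 * ((1 / Fintype.card ι : ℝ) * ∑ i, a i ^ 2) +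
        24 * ((1 / Fintype.card ι : ℝ) * ∑ i, b i ^ 2) := by
  set c : ℝ := 1 / Fintype.card ι
  set S := c * ∑ j, b j
  have hS : S ^ 2 ≤ c * ∑ i, b i ^ 2 := sq_mean_le_mean_sq b
  have hpoint : ∀ i, x i ^ 2 ≤ 3 * k ^ 2 * a i ^ 2 + 12 * b i ^ 2 + 12 * S ^ 2 := fun i => by
    nlinarith [h i, hx i, sq_nonneg (k * a i - 2 * b i), sq_nonneg (k * a i - 2 * S),
      sq_nonneg (b i - S)]
  have hcard : c * Fintype.card ι ≤ 1 := by
    rcases eq_or_ne (Fintype.card ι) 0 with h0 | h0 <;> simp [c, h0]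
  calc c * ∑ i, x i ^ 2 ≤ c * ∑ i, (3 * k ^ 2 * a i ^ 2 + 12 * b i ^ 2 + 12 * S ^ 2) := by
        gcongr with i
        exact hpoint i
    _ = 3 * k ^ 2 * (c * ∑ i, a i ^ 2) + 12 * (c * ∑ i, b i ^ 2) +
          12 * (c * Fintype.card ι) * S ^ 2 := by
        rw [sum_add_distrib, sum_add_distrib, sum_const, card_univ, nsmul_eq_mul, ← mul_sum,
          ← mul_sum]
        ring
    _ ≤ _ := by nlinarith [sq_nonneg S]


end Mean

section MAML

variable {E : Type*} [NormedAddCommGroup E] [InnerProductSpace ℝ E] [CompleteSpace E]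
  {ι : Type*} [Fintype ι] {f : ι → E → ℝ} {L B α : ℝ}

lemma norm_gradient_maml_sub_mean_le (hf : ∀ i, ContDiff ℝ 2 (f i)) (hL0 : 0 ≤ L)
    (hL : ∀ i x y, ‖gradient (f i) x - gradient (f i) y‖ ≤ L * ‖x - y‖)
    (hB : ∀ i x, ‖gradient (f i) x‖ ≤ B) (hα : 0 ≤ α) (hαL : α * L ≤ 1) (w : E) (i : ι) :
    let c : ℝ := 1 / Fintype.card ι
    let fbar := fun x => c * ∑ j, f j x
    let p := w - α • gradient fbar w
    let r := fun j => ‖gradient (f j) w - gradient fbar w‖ + ‖gradient (f j) p - gradient fbar p‖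
    ‖gradient (fun x => f i (x - α • gradient (f i) x)) w -
        gradient (fun x => c * ∑ j, f j (x - α • gradient (f j) x)) w‖ ≤
      α * B * ‖fderiv ℝ (gradient (f i)) w - fderiv ℝ (gradient fbar) w‖ + 2 * r i +
        2 * (c * ∑ j, r j) := by
  intro c fbar p r
  set H := fun j => fderiv ℝ (gradient (f j)) w
  set A := fun j => ContinuousLinearMap.id ℝ E - α • H j
  set u := fun j => gradient (f j) (w - α • gradient (f j) w)
  set v := gradient fbar p
  have hgrad_fbar (x : E) : gradient fbar x = c • ∑ j, gradient (f j) x :=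
    gradient_const_mul_sum c fun j => (hf j).differentiable (by norm_num) x
  have hhess_fbar : fderiv ℝ (gradient fbar) w = c • ∑ j, H j := by
    rw [funext hgrad_fbar]
    exact ((HasFDerivAt.fun_sum fun j _ =>
      ((hf j).differentiable_gradient w).hasFDerivAt).const_smul c).fderiv
  have hgrad_maml (j : ι) := hasGradientAt_comp_sub_smul_gradient (hf j) α w
  have hgrad_maml_mean : gradient (fun x => c * ∑ j, f j (x - α • gradient (f j) x)) w =
      c • ∑ j, (A j).adjoint (u j) := by
    rw [gradient_const_mul_sum c fun j => (hgrad_maml j).differentiableAt]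
    simp only [(hgrad_maml _).gradient, A, H, u]
  have hA (j : ι) : ‖(A j).adjoint‖ ≤ 2 := by
    linarith [norm_adjoint_id_sub_smul_le hα (norm_fderiv_gradient_le_of_lipschitz hL0 (hL j) w)]
  have hA_dev :
      ‖(A i).adjoint - c • ∑ j, (A j).adjoint‖ ≤ α * ‖H i - fderiv ℝ (gradient fbar) w‖ := by
    have : (A i).adjoint - c • ∑ j, (A j).adjoint = (A i - c • ∑ j, A j).adjoint := by
      simp only [map_sub, map_smul, map_sum]
    rw [this, LinearIsometryEquiv.norm_map, sub_mean_const_sub_smul, norm_smul, hhess_fbar,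
      Real.norm_of_nonneg hα, norm_sub_rev]
  have hv : ‖v‖ ≤ B := by
    simpa only [v, hgrad_fbar p] using norm_mean_le (fun j => hB j p) i
  have hu (j : ι) : ‖u j - v‖ ≤ r j :=
    calc ‖u j - v‖ ≤ ‖u j - gradient (f j) p‖ + ‖gradient (f j) p - v‖ :=
          norm_sub_le_norm_sub_add_norm_sub _ _ _
      _ ≤ r j := add_le_add_left (norm_gradient_sub_smul_sub_le (hL j) hα hαL w _) _
  rw [(hgrad_maml i).gradient, hgrad_maml_mean]
  have hterm (j : ι) : ‖(A j).adjoint‖ * ‖u j - v‖ ≤ 2 * r j :=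
    mul_le_mul (hA j) (hu j) (norm_nonneg _) zero_le_two
  refine (norm_apply_sub_mean_apply_le (fun j => (A j).adjoint) u v i).trans ?_
  gcongr ?_ + ?_ + ?_
  · calc _ ≤ α * ‖H i - fderiv ℝ (gradient fbar) w‖ * B :=
          mul_le_mul hA_dev hv (norm_nonneg _) (by positivity)
      _ = _ := by ring
  · exact hterm i
  · rw [mul_left_comm, mul_sum univ r 2]
    exact mul_le_mul_of_nonneg_left (sum_le_sum fun j _ => hterm j) (by positivity)

lemma mean_sq_norm_gradient_maml_sub_mean_le (hf : ∀ i, ContDiff ℝ 2 (f i)) (hL0 : 0 ≤ L)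
    (hL : ∀ i x y, ‖gradient (f i) x - gradient (f i) y‖ ≤ L * ‖x - y‖)
    (hB : ∀ i x, ‖gradient (f i) x‖ ≤ B) (hα : 0 ≤ α) (hαL : α * L ≤ 1) (w : E) :
    let c : ℝ := 1 / Fintype.card ι
    let fbar := fun x => c * ∑ j, f j x
    let p := w - α • gradient fbar w
    c * ∑ i, ‖gradient (fun x => f i (x - α • gradient (f i) x)) w -
        gradient (fun x => c * ∑ j, f j (x - α • gradient (f j) x)) w‖ ^ 2 ≤
      3 * (α * B) ^ 2 * (c * ∑ i, ‖fderiv ℝ (gradient (f i)) w - fderiv ℝ (gradient fbar) w‖ ^ 2) +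
        48 * (c * ∑ i, ‖gradient (f i) w - gradient fbar w‖ ^ 2 +
          c * ∑ i, ‖gradient (f i) p - gradient fbar p‖ ^ 2) := by
  intro c fbar p
  refine (mean_sq_le_of_le_add_add_mean _ _ _ (α * B) (fun i => norm_nonneg _)
    (norm_gradient_maml_sub_mean_le hf hL0 hL hB hα hαL w)).trans ?_
  have := mean_sq_add_le (fun i => ‖gradient (f i) w - gradient fbar w‖)
    (fun i => ‖gradient (f i) p - gradient fbar p‖)
  linarith

end MAML

theorem stmt_18 {m n : ℕ} (f : Fin n → EuclideanSpace ℝ (Fin m) → ℝ)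
    (L B α γG γH : ℝ)
    (hf : ∀ i, ContDiff ℝ 2 (f i))
    (hL : ∀ i w u, ‖gradient (f i) w - gradient (f i) u‖ ≤ L * ‖w - u‖)
    (hB : ∀ i w, ‖gradient (f i) w‖ ≤ B)
    (hγG : ∀ w, (1 / n : ℝ) *
      ∑ i, ‖gradient (f i) w - gradient (fun x => (1 / n : ℝ) * ∑ j, f j x) w‖ ^ 2
        ≤ γG ^ 2)
    (hγH : ∀ w, (1 / n : ℝ) *
      ∑ i, ‖fderiv ℝ (gradient (f i)) w -
            fderiv ℝ (gradient (fun x => (1 / n : ℝ) * ∑ j, f j x)) w‖ ^ 2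
        ≤ γH ^ 2)
    (hα : 0 < α) (hαL : α ≤ 1 / L)
    (F : Fin n → EuclideanSpace ℝ (Fin m) → ℝ)
    (hF : ∀ i, F i = fun x => f i (x - α • gradient (f i) x)) :
    ∀ w, (1 / n : ℝ) *
      ∑ i, ‖gradient (F i) w - gradient (fun x => (1 / n : ℝ) * ∑ j, F j x) w‖ ^ 2
        ≤ 3 * B ^ 2 * α ^ 2 * γH ^ 2 + 192 * γG ^ 2 := by
  intro w
  have hL0 : 0 < L := by
    by_contra! hL0
    linarith [one_div_nonpos.mpr hL0]
  have hαL' : α * L ≤ 1 := by rwa [le_div_iff₀ hL0] at hαL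
  have hn : (n : ℝ) = Fintype.card (Fin n) := by simp
  simp only [hF]
  rw [hn] at hγG hγH ⊢
  refine (mean_sq_norm_gradient_maml_sub_mean_le hf hL0.le hL hB hα.le hαL' w).trans ?_
  calc _ ≤ 3 * (α * B) ^ 2 * γH ^ 2 + 48 * (γG ^ 2 + γG ^ 2) := by
        gcongr
        exacts [hγH w, hγG w, hγG _]
    _ ≤ 3 * B ^ 2 * α ^ 2 * γH ^ 2 + 192 * γG ^ 2 := by nlinarith [sq_nonneg γG]
end
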